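/- The translation from GEPCF to the λY-calculus preserves typing: if Γ ⊢ V : T then ⟦Γ⟧ ⊢ ⟦V⟧ : ⟦T⟧, and if Γ ⊢_E C : T then ⟦Γ⟧ ⊢ ⟦C⟧ : ⟦E⟧ → (⟦T⟧ → o) → o. -/

import Mathlib

/-! The λY-calculus: simply-typed λ-calculus with a fixpoint combinator Y and
first-order constants drawn from a signature `F` with arity `ar : F → ℕ`. -/

namespace LamY

/-- Simple types: `o` and arrow types. -/
inductive Ty : Type
  | o : Ty
  | arr : Ty → Ty → Ty
  deriving DecidableEq

/-- Terms (de Bruijn representation) over a set `F` of first-order constants. -/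
inductive Tm (F : Type) : Type
  | var : ℕ → Tm F
  | lam : Tm F → Tm F
  | app : Tm F → Tm F → Tm F
  | fixY : Tm F → Tm F
  | const : F → Tm F

namespace Tm

variable {F : Type}

/-- Lifting of a renaming under a binder. -/
def upr (ρ : ℕ → ℕ) : ℕ → ℕ
  | 0 => 0
  | n + 1 => ρ n + 1

/-- Renaming of variables. -/
def rename (ρ : ℕ → ℕ) : Tm F → Tm F
  | .var n => .var (ρ n)
  | .lam M => .lam (rename (upr ρ) M)
  | .app M N => .app (rename ρ M) (rename ρ N)
  | .fixY M => .fixY (rename ρ M)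
  | .const f => .const f

/-- Shift all free variables up by one. -/
def lift (M : Tm F) : Tm F := rename Nat.succ M

/-- Lifting of a substitution under a binder. -/
def ups (σ : ℕ → Tm F) : ℕ → Tm F
  | 0 => .var 0
  | n + 1 => lift (σ n)

/-- Simultaneous substitution. -/
def subst (σ : ℕ → Tm F) : Tm F → Tm F
  | .var n => σ n
  | .lam M => .lam (subst (ups σ) M)
  | .app M N => .app (subst σ M) (subst σ N)
  | .fixY M => .fixY (subst σ M)
  | .const f => .const f

/-- Substitution `M[N/x]` of `N` for the variable `0` in `M`. -/
def subst0 (N : Tm F) (M : Tm F) : Tm F :=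
  subst (fun n => match n with | 0 => N | n + 1 => .var n) M

/-- A term applied to a list of arguments: `appArgs M [N₁,…,Nₖ] = M N₁ ⋯ Nₖ`. -/
def appArgs (M : Tm F) : List (Tm F) → Tm F
  | [] => M
  | N :: Ns => appArgs (.app M N) Ns

end Tm

open Tm

/-- Weak head reduction: β at the head, unfolding of `Y`, and reduction of the
head of an application. -/
inductive Step {F : Type} : Tm F → Tm F → Prop
  | beta (M N : Tm F) : Step (.app (.lam M) N) (subst0 N M)
  | fix (M : Tm F) : Step (.fixY M) (.app M (.fixY M))
  | appL {M M' : Tm F} (N : Tm F) : Step M M' → Step (.app M N) (.app M' N)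

/-- A term is in weak head normal form when no weak head reduction applies. -/
def WHNF {F : Type} (M : Tm F) : Prop := ¬ ∃ N, Step M N

/-- The type `o^n → o` of a first-order constant with arity `n`. -/
def constTy : ℕ → Ty
  | 0 => .o
  | n + 1 => .arr .o (constTy n)

/-- Typing judgement for λY-terms. Contexts are lists of types (de Bruijn). -/
inductive HasTy {F : Type} (ar : F → ℕ) : List Ty → Tm F → Ty → Prop
  | var {Γ n T} : Γ[n]? = some T → HasTy ar Γ (.var n) T
  | lam {Γ M T U} : HasTy ar (T :: Γ) M U → HasTy ar Γ (.lam M) (.arr T U)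
  | app {Γ M N T U} : HasTy ar Γ M (.arr T U) → HasTy ar Γ N T →
      HasTy ar Γ (.app M N) U
  | fix {Γ M T} : HasTy ar Γ M (.arr T T) → HasTy ar Γ (.fixY M) T
  | const {Γ} (f : F) : HasTy ar Γ (.const f) (constTy (ar f))

end LamY

/-! GEPCF: EPCF extended with *restricted* handlers (for generic effects).
A handler consists of a return clause `Cr` (binding the returned value) and,
for each handled operation `σᵢ : Bᵢ ⇝ kᵢ`, a clause `Hop σᵢ` binding the
parameter only (no access to the continuation) and returning a result of the
enumeration type `kᵢ`. Effect rows are (finite) lists of operations, and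
λ-abstractions carry the latent effect row of their arrow type. -/

namespace GEPCF

/-- GEPCF types: base types, enumeration types, effect-annotated arrows. -/
inductive GTy (BV Op : Type) : Type
  | base : BV → GTy BV Op
  | enum : ℕ → GTy BV Op
  | arr : GTy BV Op → List Op → GTy BV Op → GTy BV Op

mutual
/-- GEPCF values (de Bruijn representation). -/
inductive GVal (CV Op : Type) : Type
  | cv : CV → GVal CV Op
  | num : ℕ → ℕ → GVal CV Op
  | var : ℕ → GVal CV Op
  | lam : List Op → GComp CV Op → GVal CV Op
  | fixv : GVal CV Op → GVal CV Op
/-- GEPCF computations. `handle Eh Cr Hop C` handles the operations in the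
row `Eh` of the computation `C`, with return clause `Cr` and operation
clauses `Hop` (each binding only the parameter, index 0). -/
inductive GComp (CV Op : Type) : Type
  | app : GVal CV Op → GVal CV Op → GComp CV Op
  | ret : GVal CV Op → GComp CV Op
  | letin : GComp CV Op → GComp CV Op → GComp CV Op
  | opc : Op → GVal CV Op → GComp CV Op → GComp CV Op
  | case : (k : ℕ) → GVal CV Op → (Fin k → GComp CV Op) → GComp CV Op
  | handle : List Op → GComp CV Op → (Op → GComp CV Op) → GComp CV Op →
      GComp CV Op
end

variable {CV Op : Type}

/-- Lifting of a renaming under a binder. -/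
def upr (ρ : ℕ → ℕ) : ℕ → ℕ
  | 0 => 0
  | n + 1 => ρ n + 1

mutual
/-- Renaming of variables in values. -/
def renV (ρ : ℕ → ℕ) : GVal CV Op → GVal CV Op
  | .cv v => .cv v
  | .num n k => .num n k
  | .var n => .var (ρ n)
  | .lam E C => .lam E (renC (upr ρ) C)
  | .fixv V => .fixv (renV (upr ρ) V)
/-- Renaming of variables in computations. -/
def renC (ρ : ℕ → ℕ) : GComp CV Op → GComp CV Op
  | .app V W => .app (renV ρ V) (renV ρ W)
  | .ret V => .ret (renV ρ V)
  | .letin C B => .letin (renC ρ C) (renC (upr ρ) B)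
  | .opc σ V C => .opc σ (renV ρ V) (renC (upr ρ) C)
  | .case k V Cs => .case k (renV ρ V) (fun i => renC ρ (Cs i))
  | .handle Eh Cr Hop C =>
      .handle Eh (renC (upr ρ) Cr) (fun σ => renC (upr ρ) (Hop σ)) (renC ρ C)
end

/-- Lifting of a substitution under a binder. -/
def upsG (σ : ℕ → GVal CV Op) : ℕ → GVal CV Op
  | 0 => .var 0
  | n + 1 => renV Nat.succ (σ n)

mutual
/-- Simultaneous substitution in values. -/
def subV (σ : ℕ → GVal CV Op) : GVal CV Op → GVal CV Op
  | .cv v => .cv v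
  | .num n k => .num n k
  | .var n => σ n
  | .lam E C => .lam E (subC (upsG σ) C)
  | .fixv V => .fixv (subV (upsG σ) V)
/-- Simultaneous substitution in computations. -/
def subC (σ : ℕ → GVal CV Op) : GComp CV Op → GComp CV Op
  | .app V W => .app (subV σ V) (subV σ W)
  | .ret V => .ret (subV σ V)
  | .letin C B => .letin (subC σ C) (subC (upsG σ) B)
  | .opc op V C => .opc op (subV σ V) (subC (upsG σ) C)
  | .case k V Cs => .case k (subV σ V) (fun i => subC σ (Cs i))
  | .handle Eh Cr Hop C =>
      .handle Eh (subC (upsG σ) Cr) (fun op => subC (upsG σ) (Hop op))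
        (subC σ C)
end

/-- Substitution `C[W/x]` of the value `W` for the variable `0`. -/
def subst0C (W : GVal CV Op) (C : GComp CV Op) : GComp CV Op :=
  subC (fun n => match n with | 0 => W | n + 1 => .var n) C

/-- Substitution `V[W/x]` of the value `W` for the variable `0`. -/
def subst0V (W : GVal CV Op) (V : GVal CV Op) : GVal CV Op :=
  subV (fun n => match n with | 0 => W | n + 1 => .var n) V

/-- The reduction relation of GEPCF: the EPCF rules, plus
`handle H (return V) → C_r[x := V]` and
`handle H (σᵢ(V; y.C)) → let y = Cᵢ[x := V] in handle H C`. -/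
inductive GStep : GComp CV Op → GComp CV Op → Prop
  | beta (E : List Op) (C : GComp CV Op) (W : GVal CV Op) :
      GStep (.app (.lam E C) W) (subst0C W C)
  | fix (V W : GVal CV Op) :
      GStep (.app (.fixv V) W) (.app (subst0V (.fixv V) V) W)
  | case {n k : ℕ} (h : n < k) (Cs : Fin k → GComp CV Op) :
      GStep (.case k (.num n k) Cs) (Cs ⟨n, h⟩)
  | letRet (V : GVal CV Op) (C : GComp CV Op) :
      GStep (.letin (.ret V) C) (subst0C V C)
  | letCong {C C' : GComp CV Op} (B : GComp CV Op) :
      GStep C C' → GStep (.letin C B) (.letin C' B)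
  | letOp (σ : Op) (V : GVal CV Op) (C D : GComp CV Op) :
      GStep (.letin (.opc σ V C) D)
        (.opc σ V (.letin C (renC (upr Nat.succ) D)))
  | hCong {C C' : GComp CV Op} (Eh : List Op) (Cr : GComp CV Op)
      (Hop : Op → GComp CV Op) :
      GStep C C' → GStep (.handle Eh Cr Hop C) (.handle Eh Cr Hop C')
  | hRet (Eh : List Op) (Cr : GComp CV Op) (Hop : Op → GComp CV Op)
      (V : GVal CV Op) :
      GStep (.handle Eh Cr Hop (.ret V)) (subst0C V Cr)
  | hOp {σ : Op} (Eh : List Op) (Cr : GComp CV Op) (Hop : Op → GComp CV Op)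
      (V : GVal CV Op) (C : GComp CV Op) :
      σ ∈ Eh →
      GStep (.handle Eh Cr Hop (.opc σ V C))
        (.letin (subst0C V (Hop σ))
          (.handle Eh (renC (upr Nat.succ) Cr)
            (fun op => renC (upr Nat.succ) (Hop op)) C))

section Typing

variable {BV : Type} (cvTy : CV → BV) (opPar : Op → BV) (opAr : Op → ℕ)

mutual
/-- Typing judgment for GEPCF values. -/
inductive GVTy : List (GTy BV Op) → GVal CV Op → GTy BV Op → Prop
  | cv {Γ} (v : CV) : GVTy Γ (.cv v) (.base (cvTy v))
  | num {Γ n k} : n < k → GVTy Γ (.num n k) (.enum k)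
  | var {Γ n T} : Γ[n]? = some T → GVTy Γ (.var n) T
  | lam {Γ C T E U} : GCTy (T :: Γ) E C U → GVTy Γ (.lam E C) (.arr T E U)
  | fixv {Γ V T E U} : GVTy ((GTy.arr T E U) :: Γ) V (.arr T E U) →
      GVTy Γ (.fixv V) (.arr T E U)
/-- Typing judgment `Γ ⊢_E C : T` for GEPCF computations. In the rule for
`handle`, the handled computation uses the row `Eh`, the return clause binds
the returned value, and the clause for `σᵢ : Bᵢ ⇝ kᵢ` binds only the
parameter `x : Bᵢ` and has the enumeration type `kᵢ`. -/
inductive GCTy : List (GTy BV Op) → List Op → GComp CV Op → GTy BV Op → Prop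
  | app {Γ E V W T U} : GVTy Γ V (.arr T E U) → GVTy Γ W T →
      GCTy Γ E (.app V W) U
  | ret {Γ E V T} : GVTy Γ V T → GCTy Γ E (.ret V) T
  | letin {Γ E C B T U} : GCTy Γ E C T → GCTy (T :: Γ) E B U →
      GCTy Γ E (.letin C B) U
  | opc {Γ E σ V C T} : σ ∈ E → GVTy Γ V (.base (opPar σ)) →
      GCTy ((GTy.enum (opAr σ)) :: Γ) E C T → GCTy Γ E (.opc σ V C) T
  | case {Γ E k V T} {Cs : Fin k → GComp CV Op} : GVTy Γ V (.enum k) →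
      (∀ i, GCTy Γ E (Cs i) T) → GCTy Γ E (.case k V Cs) T
  | handle {Γ E Eh C Cr Hop T U} :
      GCTy Γ Eh C T →
      GCTy (T :: Γ) E Cr U →
      (∀ σ ∈ Eh, GCTy ((GTy.base (opPar σ)) :: Γ) E (Hop σ) (.enum (opAr σ))) →
      GCTy Γ E (.handle Eh Cr Hop C) U
end

end Typing

end GEPCF

namespace GEPCF

open LamY LamY.Tm

variable {CV Op : Type}

/-- The λY signature targeted by the translation: a constant for every
constant value, and a constant of arity `k+1` for every operation
`σ : B ⇝ k`. -/
def arF (opAr : Op → ℕ) : CV ⊕ Op → ℕ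
  | .inl _ => 0
  | .inr σ => opAr σ + 1

/-- The λY representation `λx₁…x_k.x_{n+1}` of the numeral `n̲ : k`. -/
def numStar (k n : ℕ) : Tm (CV ⊕ Op) :=
  (List.range k).foldr (fun _ M => .lam M) (.var (k - 1 - n))

/-- The type `o → (⟦k⟧ → o) → o` of the handler continuation for an
operation of arity `k`. -/
def hTy (k : ℕ) : Ty := .arr .o (.arr (.arr (constTy k) .o) .o)

/-- Translation of GEPCF types: `⟦B⟧ = o`, `⟦k⟧ = o^k → o`, and
`⟦T →_E U⟧ = ⟦T⟧ → ⟦E⟧ → (⟦U⟧ → o) → o` (with `⟦E⟧` curried). -/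
def trTy (opAr : Op → ℕ) {BV : Type} : GTy BV Op → Ty
  | .base _ => .o
  | .enum k => constTy k
  | .arr T E U =>
      .arr (trTy opAr T)
        (E.foldr (fun σ X => .arr (hTy (opAr σ)) X)
          (.arr (.arr (trTy opAr U) .o) .o))

/-- The type `⟦E⟧ → (⟦T⟧ → o) → o` of the translation of a computation
`Γ ⊢_E C : T` (with `⟦E⟧` curried). -/
def compTy (opAr : Op → ℕ) {BV : Type} (E : List Op) (T : GTy BV Op) : Ty :=
  E.foldr (fun σ X => .arr (hTy (opAr σ)) X) (.arr (.arr (trTy opAr T) .o) .o)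

/-- Iterated λ-abstraction. -/
def lams : ℕ → Tm (CV ⊕ Op) → Tm (CV ⊕ Op)
  | 0, M => M
  | n + 1, M => .lam (lams n M)

/-- The list of variables referring to the `n` handler continuations
`h₀,…,h_{n-1}`, when the continuation variable `c` has index `off`. -/
def hvars (n off : ℕ) : List (Tm (CV ⊕ Op)) :=
  List.ofFn fun j : Fin n => Tm.var (off + (n - (j : ℕ)))

/-- The renaming placing a term with one bound variable (index `0`) under `d`
extra enclosing binders. -/
def skip1 (d : ℕ) : ℕ → ℕ
  | 0 => 0
  | m + 1 => m + d

section Translation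

variable [DecidableEq Op] (opAr : Op → ℕ)

mutual
/-- The CPS translation with handler continuations, on values. -/
def trV (opAr : Op → ℕ) [DecidableEq Op] : GVal CV Op → Tm (CV ⊕ Op)
  | .cv v => .const (.inl v)
  | .num n k => numStar k n
  | .var n => .var n
  | .lam E C => .lam (trC opAr E C)
  | .fixv V => .fixY (.lam (trV opAr V))
/-- The CPS translation with handler continuations, on computations typed
with the effect row `E`: `⟦C⟧` expects `|E|` handler continuations `h⃗` and a
return continuation `c`. -/
def trC (opAr : Op → ℕ) [DecidableEq Op] (E : List Op) :
    GComp CV Op → Tm (CV ⊕ Op)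
  | .app V W => .app (trV opAr V) (trV opAr W)
  | .ret V =>
      lams (E.length + 1) (.app (.var 0) (rename (· + (E.length + 1)) (trV opAr V)))
  | .letin C B =>
      lams (E.length + 1)
        (appArgs (rename (· + (E.length + 1)) (trC opAr E C))
          (hvars E.length 0 ++
            [.lam (appArgs (rename (skip1 (E.length + 2)) (trC opAr E B))
              (hvars E.length 1 ++ [.var 1]))]))
  | .opc σ V C =>
      lams (E.length + 1)
        (.app
          (.app (.var (E.length - E.idxOf σ))
            (rename (· + (E.length + 1)) (trV opAr V)))
          (.lam (appArgs (rename (skip1 (E.length + 2)) (trC opAr E C))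
            (hvars E.length 1 ++ [.var 1]))))
  | .case k V Cs =>
      lams (E.length + 1)
        (appArgs (rename (· + (E.length + 1)) (trV opAr V))
          (List.ofFn fun i : Fin k =>
            appArgs (rename (· + (E.length + 1)) (trC opAr E (Cs i)))
              (hvars E.length 0 ++ [.var 0])))
  | .handle Eh Cr Hop C =>
      lams (E.length + 1)
        (appArgs (rename (· + (E.length + 1)) (trC opAr Eh C))
          (Eh.map (fun σ =>
              Tm.lam (.lam
                (appArgs
                  (rename (fun v => match v with
                    | 0 => 1
                    | m + 1 => m + (E.length + 3)) (trC opAr E (Hop σ)))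
                  (hvars E.length 2 ++ [.var 0])))) ++
            [.lam (appArgs (rename (skip1 (E.length + 2)) (trC opAr E Cr))
              (hvars E.length 1 ++ [.var 1]))]))
end

end Translation

end GEPCF

/-! Typing is preserved by simultaneous induction on the derivations of `Γ ⊢ V : T` and
`Γ ⊢_E C : T`. Every computation but an application translates to `λh⃗ c. M`, so its case amounts to
typing the body `M : o` in `⟦Γ⟧` extended by `h⃗ : ⟦E⟧` and `c : ⟦T⟧ → o`: translated subterms
are weakened into that context and applied to `h⃗` and a continuation. The restriction on
handlers is what makes the interpreted clause `λx k. ⟦Cᵢ⟧ h⃗ k` of `σᵢ : Bᵢ ⇝ kᵢ` have the type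
`o → (⟦kᵢ⟧ → o) → o` of a handler continuation: `Cᵢ : kᵢ` only ever returns to `k`. -/

namespace LamY

variable {F : Type} {ar : F → ℕ}

def arrows (Ts : List Ty) (T : Ty) : Ty := Ts.foldr .arr T

theorem constTy_eq_arrows (k : ℕ) : constTy k = arrows (List.replicate k .o) .o := by
  induction k with
  | zero => rfl
  | succ k ih => rw [constTy, ih]; rfl

namespace HasTy

theorem rename {Γ Δ : List Ty} {ρ : ℕ → ℕ} {M : Tm F} {T : Ty} (h : HasTy ar Γ M T)
    (hρ : ∀ n U, Γ[n]? = some U → Δ[ρ n]? = some U) : HasTy ar Δ (M.rename ρ) T := by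
  induction h generalizing Δ ρ with
  | var h => exact .var (hρ _ _ h)
  | lam _ ih =>
    refine .lam (ih fun n U h => ?_)
    cases n with
    | zero => exact h
    | succ m => exact hρ m U h
  | app _ _ ih₁ ih₂ => exact .app (ih₁ hρ) (ih₂ hρ)
  | fix _ ih => exact .fix (ih hρ)
  | const f => exact .const f

theorem rename_add {Γ : List Ty} (P : List Ty) {d : ℕ} (hd : P.length = d) {M : Tm F} {T : Ty}
    (h : HasTy ar Γ M T) : HasTy ar (P ++ Γ) (M.rename (· + d)) T :=
  h.rename fun n U hn => by
    rwa [List.getElem?_append_right (by omega), hd, Nat.add_sub_cancel]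

theorem appArgs {Γ : List Ty} {M : Tm F} {Ns : List (Tm F)} {Ts : List Ty} {T : Ty}
    (hM : HasTy ar Γ M (arrows Ts T)) (hNs : List.Forall₂ (HasTy ar Γ) Ns Ts) :
    HasTy ar Γ (M.appArgs Ns) T := by
  induction hNs generalizing M with
  | nil => exact hM
  | cons hN _ ih => exact ih (.app hM hN)

end HasTy

end LamY

namespace GEPCF

open LamY LamY.Tm

variable {CV Op : Type} {ar : CV ⊕ Op → ℕ}

theorem hasTy_lams (L : List Ty) {Γ : List Ty} {M : Tm (CV ⊕ Op)} {T : Ty}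
    (h : HasTy ar (L.reverse ++ Γ) M T) : HasTy ar Γ (lams L.length M) (arrows L T) := by
  induction L generalizing Γ with
  | nil => exact h
  | cons A L ih => exact .lam (ih (by simpa using h))

theorem foldr_lam_eq_lams (k : ℕ) (M : Tm (CV ⊕ Op)) :
    (List.range k).foldr (fun _ N => .lam N) M = lams k M := by
  induction k with
  | zero => rfl
  | succ k ih => rw [List.range_succ_eq_map, List.foldr_cons, List.foldr_map, ih]; rfl

theorem hasTy_numStar {Γ : List Ty} {n k : ℕ} (h : n < k) :
    HasTy ar Γ (numStar (CV := CV) (Op := Op) k n) (constTy k) := by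
  have hvar : HasTy ar ((List.replicate k Ty.o).reverse ++ Γ) (.var (k - 1 - n)) .o := .var (by
    rw [List.reverse_replicate, List.getElem?_append_left (by simp; omega),
      List.getElem?_replicate_of_lt (by omega)])
  rw [numStar, foldr_lam_eq_lams, constTy_eq_arrows]
  simpa using hasTy_lams _ hvar

theorem hasTy_rename_skip1 {F : Type} {ar : F → ℕ} {Γ : List Ty} {A : Ty} (P : List Ty)
    {d : ℕ} (hd : P.length + 1 = d) {M : Tm F} {T : Ty} (h : HasTy ar (A :: Γ) M T) :
    HasTy ar (A :: (P ++ Γ)) (M.rename (skip1 d)) T :=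
  h.rename fun n U hn => by
    cases n with
    | zero => exact hn
    | succ m =>
      rw [skip1, ← hd, show m + (P.length + 1) = m + P.length + 1 by omega,
        List.getElem?_cons_succ, List.getElem?_append_right (by omega), Nat.add_sub_cancel]
      exact hn

theorem hasTy_hvars (P H Γ : List Ty) {off : ℕ} (hP : P.length = off + 1) :
    List.Forall₂ (HasTy ar (P ++ (H.reverse ++ Γ)))
      (hvars (CV := CV) (Op := Op) H.length off) H := by
  rw [List.forall₂_iff_get]
  refine ⟨by simp [hvars], fun i _ hi => ?_⟩
  simp only [hvars, List.get_eq_getElem, List.getElem_ofFn]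
  refine .var ?_
  rw [List.getElem?_append_right (by omega), hP, List.getElem?_append_left (by simp; omega),
    List.getElem?_reverse (by omega),
    show H.length - 1 - (off + (H.length - i) - (off + 1)) = i by omega]
  exact List.getElem?_eq_getElem hi

section Cps

variable {BV : Type} (opAr : Op → ℕ)

/-- The context under the `|E| + 1` binders of a translated computation `λh⃗ c. _`: the return
continuation `c : ⟦T⟧ → o` at index `0`, then the handler continuations, last operation of `E`
first. -/
def cpsCtx (E : List Op) (T : GTy BV Op) (Γ : List Ty) : List Ty :=
  .arr (trTy opAr T) .o :: ((E.map fun σ => hTy (opAr σ)).reverse ++ Γ)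

theorem compTy_eq_arrows (E : List Op) (T : GTy BV Op) :
    compTy opAr E T = arrows ((E.map fun σ => hTy (opAr σ)) ++ [.arr (trTy opAr T) .o]) .o := by
  simp [compTy, arrows, List.foldr_append, List.foldr_map]

variable {opAr}

theorem cpsCtx_getElem?_handler [DecidableEq Op] {E : List Op} {σ : Op} (hσ : σ ∈ E)
    (T : GTy BV Op) (Γ : List Ty) :
    (cpsCtx opAr E T Γ)[E.length - E.idxOf σ]? = some (hTy (opAr σ)) := by
  have hlt : E.idxOf σ < E.length := List.idxOf_lt_length_iff.2 hσ
  rw [cpsCtx, show E.length - E.idxOf σ = (E.length - 1 - E.idxOf σ) + 1 by omega,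
    List.getElem?_cons_succ, List.getElem?_append_left (by simp; omega),
    List.getElem?_reverse (by simp; omega)]
  simp [show E.length - 1 - (E.length - 1 - E.idxOf σ) = E.idxOf σ by omega,
    List.getElem?_eq_getElem hlt, List.getElem_idxOf hlt]

theorem hasTy_lams_compTy {E : List Op} {T : GTy BV Op} {Γ : List Ty} {M : Tm (CV ⊕ Op)}
    (h : HasTy ar (cpsCtx opAr E T Γ) M .o) :
    HasTy ar Γ (lams (E.length + 1) M) (compTy opAr E T) := by
  rw [compTy_eq_arrows]
  have := hasTy_lams (ar := ar) (Γ := Γ)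
    ((E.map fun σ => hTy (opAr σ)) ++ [.arr (trTy opAr T) .o]) (by simpa [cpsCtx] using h)
  rwa [List.length_append, List.length_map, List.length_singleton] at this

theorem hasTy_rename_cpsCtx {E : List Op} {T : GTy BV Op} {Γ : List Ty} {M : Tm (CV ⊕ Op)}
    {A : Ty} (h : HasTy ar Γ M A) :
    HasTy ar (cpsCtx opAr E T Γ) (M.rename (· + (E.length + 1))) A :=
  HasTy.rename_add (.arr (trTy opAr T) .o :: (E.map fun σ => hTy (opAr σ)).reverse) (by simp) h

theorem hasTy_appArgs_hvars {E : List Op} {S T : GTy BV Op} {Γ : List Ty} {M K : Tm (CV ⊕ Op)}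
    (hM : HasTy ar Γ M (compTy opAr E S))
    (hK : HasTy ar (cpsCtx opAr E T Γ) K (.arr (trTy opAr S) .o)) :
    HasTy ar (cpsCtx opAr E T Γ)
      (appArgs (M.rename (· + (E.length + 1))) (hvars E.length 0 ++ [K])) .o := by
  rw [compTy_eq_arrows] at hM
  refine (hasTy_rename_cpsCtx hM).appArgs (List.rel_append ?_ (.cons hK .nil))
  simpa [cpsCtx] using hasTy_hvars (ar := ar) [.arr (trTy opAr T) .o]
    (E.map fun σ => hTy (opAr σ)) Γ (off := 0) rfl

/-- The continuation `λx. ⟦B⟧ h⃗ c`. -/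
theorem hasTy_contLam {E : List Op} {S U : GTy BV Op} {Γ : List Ty} {B : Tm (CV ⊕ Op)}
    (hB : HasTy ar (trTy opAr S :: Γ) B (compTy opAr E U)) :
    HasTy ar (cpsCtx opAr E U Γ)
      (.lam (appArgs (B.rename (skip1 (E.length + 2))) (hvars E.length 1 ++ [.var 1])))
      (.arr (trTy opAr S) .o) := by
  rw [compTy_eq_arrows] at hB
  refine .lam ((hasTy_rename_skip1
    (.arr (trTy opAr U) .o :: (E.map fun σ => hTy (opAr σ)).reverse) (by simp) hB).appArgs
    (List.rel_append ?_ (.cons (.var rfl) .nil)))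
  simpa [cpsCtx] using hasTy_hvars (ar := ar) [trTy opAr S, .arr (trTy opAr U) .o]
    (E.map fun σ => hTy (opAr σ)) Γ (off := 1) rfl

/-- The interpreted handler clause `λx k. ⟦Cᵢ⟧ h⃗ k`. -/
theorem hasTy_handlerLam {E : List Op} {k : ℕ} {U : GTy BV Op} {Γ : List Ty}
    {H : Tm (CV ⊕ Op)} (hH : HasTy ar (.o :: Γ) H (compTy opAr E (GTy.enum k : GTy BV Op))) :
    HasTy ar (cpsCtx opAr E U Γ)
      (.lam (.lam (appArgs (H.rename fun v => match v with
          | 0 => 1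
          | m + 1 => m + (E.length + 3))
        (hvars E.length 2 ++ [.var 0]))))
      (hTy k) := by
  rw [compTy_eq_arrows] at hH
  refine .lam (.lam ((hH.rename fun n A hn => ?_).appArgs
    (List.rel_append ?_ (.cons (.var rfl) .nil))))
  · cases n with
    | zero => exact hn
    | succ m =>
      dsimp only
      rw [show m + (E.length + 3) = (m + E.length) + 1 + 1 + 1 by omega]
      simpa [cpsCtx, List.getElem?_append_right] using hn
  · simpa [cpsCtx, trTy] using hasTy_hvars (ar := ar)
      [.arr (constTy k) .o, .o, .arr (trTy opAr U) .o] (E.map fun σ => hTy (opAr σ)) Γ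
      (off := 2) rfl

end Cps

section Translation

variable {BV : Type} {opAr : Op → ℕ} [DecidableEq Op]

theorem hasTy_trC_ret {E : List Op} {Δ : List Ty} {V : GVal CV Op} {T : GTy BV Op}
    (hV : HasTy ar Δ (trV opAr V) (trTy opAr T)) :
    HasTy ar Δ (trC opAr E (.ret V)) (compTy opAr E T) :=
  hasTy_lams_compTy (.app (.var rfl) (hasTy_rename_cpsCtx hV))

theorem hasTy_trC_letin {E : List Op} {Δ : List Ty} {C B : GComp CV Op} {T U : GTy BV Op}
    (hC : HasTy ar Δ (trC opAr E C) (compTy opAr E T))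
    (hB : HasTy ar (trTy opAr T :: Δ) (trC opAr E B) (compTy opAr E U)) :
    HasTy ar Δ (trC opAr E (.letin C B)) (compTy opAr E U) :=
  hasTy_lams_compTy (hasTy_appArgs_hvars hC (hasTy_contLam hB))

theorem hasTy_trC_opc {E : List Op} {σ : Op} (hσ : σ ∈ E) {Δ : List Ty} {V : GVal CV Op}
    {C : GComp CV Op} {T : GTy BV Op} (hV : HasTy ar Δ (trV opAr V) .o)
    (hC : HasTy ar (constTy (opAr σ) :: Δ) (trC opAr E C) (compTy opAr E T)) :
    HasTy ar Δ (trC opAr E (.opc σ V C)) (compTy opAr E T) :=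
  hasTy_lams_compTy (.app (.app (.var (cpsCtx_getElem?_handler hσ T Δ)) (hasTy_rename_cpsCtx hV))
    (hasTy_contLam (S := (.enum (opAr σ) : GTy BV Op)) hC))

theorem hasTy_trC_case {E : List Op} {Δ : List Ty} {k : ℕ} {V : GVal CV Op} {T : GTy BV Op}
    {Cs : Fin k → GComp CV Op} (hV : HasTy ar Δ (trV opAr V) (constTy k))
    (hCs : ∀ i, HasTy ar Δ (trC opAr E (Cs i)) (compTy opAr E T)) :
    HasTy ar Δ (trC opAr E (.case k V Cs)) (compTy opAr E T) := by
  rw [constTy_eq_arrows] at hV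
  refine hasTy_lams_compTy ((hasTy_rename_cpsCtx hV).appArgs ?_)
  rw [← List.ofFn_const, List.forall₂_iff_get]
  exact ⟨by simp, fun i _ _ => by simpa using hasTy_appArgs_hvars (hCs _) (.var rfl)⟩

theorem hasTy_trC_handle {E Eh : List Op} {Δ : List Ty} {C Cr : GComp CV Op}
    {Hop : Op → GComp CV Op} {T U : GTy BV Op}
    (hC : HasTy ar Δ (trC opAr Eh C) (compTy opAr Eh T))
    (hCr : HasTy ar (trTy opAr T :: Δ) (trC opAr E Cr) (compTy opAr E U))
    (hHop : ∀ σ ∈ Eh, HasTy ar (.o :: Δ) (trC opAr E (Hop σ))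
      (compTy opAr E (.enum (opAr σ) : GTy BV Op))) :
    HasTy ar Δ (trC opAr E (.handle Eh Cr Hop C)) (compTy opAr E U) := by
  rw [compTy_eq_arrows] at hC
  refine hasTy_lams_compTy ((hasTy_rename_cpsCtx hC).appArgs
    (List.rel_append ?_ (.cons (hasTy_contLam hCr) .nil)))
  rw [List.forall₂_map_left_iff, List.forall₂_map_right_iff, List.forall₂_same]
  exact fun σ hσ => hasTy_handlerLam (hHop σ hσ)

variable {cvTy : CV → BV} {opPar : Op → BV}

mutual

theorem hasTy_trV : ∀ {Γ : List (GTy BV Op)} {V : GVal CV Op} {T : GTy BV Op},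
    GVTy cvTy opPar opAr Γ V T →
    HasTy (arF opAr) (Γ.map (trTy opAr)) (trV opAr V) (trTy opAr T)
  | _, _, _, .cv v => .const (Sum.inl v)
  | _, _, _, .num h => hasTy_numStar h
  | _, _, _, .var h => .var (by simp [h])
  | _, _, _, .lam hC => .lam (hasTy_trC hC)
  | _, _, _, .fixv hV => .fix (.lam (hasTy_trV hV))

theorem hasTy_trC : ∀ {Γ : List (GTy BV Op)} {E : List Op} {C : GComp CV Op} {T : GTy BV Op},
    GCTy cvTy opPar opAr Γ E C T →
    HasTy (arF opAr) (Γ.map (trTy opAr)) (trC opAr E C) (compTy opAr E T)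
  | _, _, _, _, .app hV hW => .app (hasTy_trV hV) (hasTy_trV hW)
  | _, _, _, _, .ret hV => hasTy_trC_ret (hasTy_trV hV)
  | _, _, _, _, .letin hC hB => hasTy_trC_letin (hasTy_trC hC) (hasTy_trC hB)
  | _, _, _, _, .opc hσ hV hC => hasTy_trC_opc hσ (hasTy_trV hV) (hasTy_trC hC)
  | _, _, _, _, .case hV hCs => hasTy_trC_case (hasTy_trV hV) fun i => hasTy_trC (hCs i)
  | _, _, _, _, .handle hC hCr hHop =>
    hasTy_trC_handle (hasTy_trC hC) (hasTy_trC hCr) fun σ hσ => hasTy_trC (hHop σ hσ)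

end

end Translation

end GEPCF

open LamY LamY.Tm GEPCF in
/-- The translation from GEPCF to the λY-calculus preserves typing: if
`Γ ⊢ V : T` then `⟦Γ⟧ ⊢ ⟦V⟧ : ⟦T⟧`, and if `Γ ⊢_E C : T` then
`⟦Γ⟧ ⊢ ⟦C⟧ : ⟦E⟧ → (⟦T⟧ → o) → o`. -/
theorem gepcf_translation_typing {BV CV Op : Type} [DecidableEq Op]
    (cvTy : CV → BV) (opPar : Op → BV) (opAr : Op → ℕ) :
    (∀ (Γ : List (GTy BV Op)) (V : GVal CV Op) (T : GTy BV Op),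
        GVTy cvTy opPar opAr Γ V T →
        HasTy (arF opAr) (Γ.map (trTy opAr)) (trV opAr V) (trTy opAr T)) ∧
    (∀ (Γ : List (GTy BV Op)) (E : List Op) (C : GComp CV Op) (T : GTy BV Op),
        GCTy cvTy opPar opAr Γ E C T →
        HasTy (arF opAr) (Γ.map (trTy opAr)) (trC opAr E C)
          (compTy opAr E T)) :=
  ⟨fun _ _ _ => hasTy_trV, fun _ _ _ _ => hasTy_trC⟩
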